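/- arXiv:1805.10391 — 2 statements merged into one kernel-verified Lean document; each statement's English description precedes it below -/
import Mathlib

section
/- For every vertex u of a finite simple graph G, the coreness of u equals the h-index of the multiset of corenesses of its neighbors; that is, k_s(u) = h-index({k_s(v) : v a neighbor of u}). -/
/-- The h-index of the multiset `{f x : x ∈ s}`: the largest natural number `h`
such that at least `h` entries are greater than or equal to `h`. -/
noncomputable def hIndex {α : Type*} (s : Finset α) (f : α → ℕ) : ℕ :=
  sSup {h : ℕ | h ≤ (s.filter fun x => h ≤ f x).card}

/-- The coreness (shell-index) of a vertex `u`: the largest `k` such that `u`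
belongs to a set `S` of vertices whose induced subgraph has minimum degree
at least `k`. -/
noncomputable def coreness {V : Type*} [Fintype V] (G : SimpleGraph V) [DecidableRel G.Adj]
    (u : V) : ℕ :=
  sSup {k : ℕ | ∃ S : Finset V, u ∈ S ∧ ∀ v ∈ S, k ≤ (S.filter fun w => G.Adj v w).card}

section aux

variable {V : Type*} [Fintype V] (G : SimpleGraph V) [DecidableRel G.Adj]

lemma coreness_bddAbove (u : V) :
    BddAbove {k : ℕ | ∃ S : Finset V, u ∈ S ∧ ∀ v ∈ S, k ≤ (S.filter fun w => G.Adj v w).card} :=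
  ⟨Fintype.card V, fun k ⟨S, hu, hS⟩ =>
    (hS u hu).trans ((Finset.card_filter_le _ _).trans (Finset.card_le_univ S))⟩

lemma coreness_spec (u : V) :
    ∃ S : Finset V, u ∈ S ∧ ∀ v ∈ S, coreness G u ≤ (S.filter fun w => G.Adj v w).card := by
  have h : coreness G u ∈ {k : ℕ | ∃ S : Finset V, u ∈ S ∧
      ∀ v ∈ S, k ≤ (S.filter fun w => G.Adj v w).card} := by
    apply Nat.sSup_mem
    · exact ⟨0, {u}, Finset.mem_singleton_self u, fun v _ => Nat.zero_le _⟩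
    · exact coreness_bddAbove G u
  exact h

lemma le_coreness {u : V} {k : ℕ} (S : Finset V) (hu : u ∈ S)
    (hS : ∀ v ∈ S, k ≤ (S.filter fun w => G.Adj v w).card) : k ≤ coreness G u :=
  le_csSup (coreness_bddAbove G u) ⟨S, hu, hS⟩

lemma hIndex_spec {α : Type*} (s : Finset α) (f : α → ℕ) :
    hIndex s f ≤ (s.filter fun x => hIndex s f ≤ f x).card := by
  have h : hIndex s f ∈ {h : ℕ | h ≤ (s.filter fun x => h ≤ f x).card} := by
    apply Nat.sSup_mem
    · exact ⟨0, Nat.zero_le _⟩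
    · exact ⟨s.card, fun k hk => hk.trans (Finset.card_filter_le _ _)⟩
  exact h

lemma le_hIndex {α : Type*} {s : Finset α} {f : α → ℕ} {h : ℕ}
    (hh : h ≤ (s.filter fun x => h ≤ f x).card) : h ≤ hIndex s f :=
  le_csSup ⟨s.card, fun k hk => hk.trans (Finset.card_filter_le _ _)⟩ hh

end aux

/-- The coreness of a vertex equals the h-index of the multiset of corenesses
of its neighbors. -/
theorem coreness_eq_hIndex_of_neighbor_coreness
    {V : Type*} [Fintype V] [DecidableEq V] (G : SimpleGraph V)
    [DecidableRel G.Adj] (u : V) :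
    coreness G u = hIndex (G.neighborFinset u) (coreness G) := by
  apply le_antisymm
  · -- coreness ≤ hIndex
    obtain ⟨S, hu, hS⟩ := coreness_spec G u
    set k := coreness G u with hk
    apply le_hIndex
    have hsub : S.filter (fun w => G.Adj u w) ⊆
        (G.neighborFinset u).filter fun v => k ≤ coreness G v := by
      intro v hv
      rw [Finset.mem_filter] at hv ⊢
      exact ⟨(G.mem_neighborFinset u v).2 hv.2, le_coreness G S hv.1 hS⟩
    exact (hS u hu).trans (Finset.card_le_card hsub)
  · -- hIndex ≤ coreness
    set h := hIndex (G.neighborFinset u) (coreness G) with hh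
    set T := (G.neighborFinset u).filter (fun v => h ≤ coreness G v) with hT
    have hcard : h ≤ T.card := hIndex_spec _ _
    have hex : ∀ v : V, ∃ Sv : Finset V, v ∈ T →
        v ∈ Sv ∧ ∀ w ∈ Sv, h ≤ (Sv.filter fun x => G.Adj w x).card := by
      intro v
      by_cases hv : v ∈ T
      · obtain ⟨Sv, hmem, hdeg⟩ := coreness_spec G v
        have hle : h ≤ coreness G v := (Finset.mem_filter.1 hv).2
        exact ⟨Sv, fun _ => ⟨hmem, fun w hw => hle.trans (hdeg w hw)⟩⟩
      · exact ⟨∅, fun h' => absurd h' hv⟩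
    choose Sv hSv using hex
    set S : Finset V := insert u (T.biUnion Sv) with hSdef
    apply le_coreness G S (Finset.mem_insert_self u _)
    intro v hv
    rcases Finset.mem_insert.1 hv with rfl | hv'
    · -- v = u : neighbors of u in S include all of T
      have hsub : T ⊆ S.filter fun w => G.Adj v w := by
        intro t ht
        rw [Finset.mem_filter]
        refine ⟨Finset.mem_insert_of_mem (Finset.mem_biUnion.2 ⟨t, ht, (hSv t ht).1⟩), ?_⟩
        exact (G.mem_neighborFinset v t).1 (Finset.mem_filter.1 ht).1
      exact hcard.trans (Finset.card_le_card hsub)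
    · obtain ⟨t, ht, hvt⟩ := Finset.mem_biUnion.1 hv'
      have hdeg := (hSv t ht).2 v hvt
      refine hdeg.trans (Finset.card_le_card ?_)
      intro x hx
      rw [Finset.mem_filter] at hx ⊢
      exact ⟨Finset.mem_insert_of_mem (Finset.mem_biUnion.2 ⟨t, ht, hx.1⟩), hx.2⟩
end

section
/- For every vertex u of a finite simple graph G, the number of neighbors v of u with k_s(v) ≥ k_s(u) + 1 is at most k_s(u); that is, u does not have k_s(u) + 1 neighbors each of whose coreness exceeds the coreness of u. -/
lemma coreness_set_bddAbove {V : Type*} [Fintype V] (G : SimpleGraph V) [DecidableRel G.Adj]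
    (u : V) :
    BddAbove {k : ℕ | ∃ S : Finset V, u ∈ S ∧ ∀ v ∈ S, k ≤ (S.filter fun w => G.Adj v w).card} := by
  refine ⟨Fintype.card V, fun k hk => ?_⟩
  obtain ⟨S, hu, h⟩ := hk
  exact (h u hu).trans ((Finset.card_filter_le _ _).trans S.card_le_univ)

lemma coreness_set_nonempty {V : Type*} [Fintype V] (G : SimpleGraph V) [DecidableRel G.Adj]
    (u : V) :
    Set.Nonempty {k : ℕ | ∃ S : Finset V, u ∈ S ∧
      ∀ v ∈ S, k ≤ (S.filter fun w => G.Adj v w).card} :=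
  ⟨0, {u}, Finset.mem_singleton_self u, fun _ _ => Nat.zero_le _⟩

lemma coreness_mem {V : Type*} [Fintype V] (G : SimpleGraph V) [DecidableRel G.Adj] (u : V) :
    ∃ S : Finset V, u ∈ S ∧ ∀ v ∈ S, coreness G u ≤ (S.filter fun w => G.Adj v w).card :=
  Nat.sSup_mem (coreness_set_nonempty G u) (coreness_set_bddAbove G u)

/-- A vertex `u` has at most `coreness G u` neighbors whose coreness exceeds
`coreness G u`. -/
theorem card_neighbors_of_gt_coreness_le
    {V : Type*} [Fintype V] [DecidableEq V] (G : SimpleGraph V)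
    [DecidableRel G.Adj] (u : V) :
    ((G.neighborFinset u).filter fun v => coreness G u + 1 ≤ coreness G v).card ≤
      coreness G u := by
  by_contra hcon
  push_neg at hcon
  set k := coreness G u with hk
  set N := (G.neighborFinset u).filter fun v => coreness G u + 1 ≤ coreness G v with hN
  have hmem : ∀ v : V, ∃ S : Finset V, v ∈ N →
      v ∈ S ∧ ∀ w ∈ S, k + 1 ≤ (S.filter fun x => G.Adj w x).card := by
    intro v
    by_cases hv : v ∈ N
    · obtain ⟨S, hvS, hS⟩ := coreness_mem G v
      have hcv : k + 1 ≤ coreness G v := (Finset.mem_filter.mp hv).2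
      exact ⟨S, fun _ => ⟨hvS, fun w hw => hcv.trans (hS w hw)⟩⟩
    · exact ⟨∅, fun h => absurd h hv⟩
  choose f hf using hmem
  set T : Finset V := insert u (N.biUnion f) with hT
  have hsubT : ∀ v ∈ N, f v ⊆ T := by
    intro v hv x hx
    exact Finset.mem_insert_of_mem (Finset.mem_biUnion.mpr ⟨v, hv, hx⟩)
  have hkey : k + 1 ∈ {m : ℕ | ∃ S : Finset V, u ∈ S ∧
      ∀ v ∈ S, m ≤ (S.filter fun w => G.Adj v w).card} := by
    refine ⟨T, Finset.mem_insert_self _ _, ?_⟩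
    intro w hw
    rcases Finset.mem_insert.mp hw with hwu | hwb
    · subst hwu
      have hNsub : N ⊆ T.filter fun x => G.Adj w x := by
        intro v hv
        refine Finset.mem_filter.mpr ⟨hsubT v hv ((hf v hv).1), ?_⟩
        exact (SimpleGraph.mem_neighborFinset G w v).mp (Finset.mem_filter.mp hv).1
      calc k + 1 ≤ N.card := hcon
        _ ≤ _ := Finset.card_le_card hNsub
    · obtain ⟨v, hv, hwf⟩ := Finset.mem_biUnion.mp hwb
      have := (hf v hv).2 w hwf
      refine this.trans (Finset.card_le_card ?_)
      exact Finset.filter_subset_filter _ (hsubT v hv)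
  have : k + 1 ≤ k := le_csSup (coreness_set_bddAbove G u) hkey
  omega
end
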